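/- Let Q be a symmetric positive definite real g×g matrix and let S be its positive definite square root (S symmetric positive definite with S·S = Q). Then for all v, n ∈ ℝ^g, (v − Q·n)ᵀ·Q⁻¹·(v − Q·n) = ‖S⁻¹·v − S·n‖₂². Consequently, for all x, y ∈ ℝ^g, the infimum over n ∈ ℤ^g of ((x − y − Q·n)ᵀ·Q⁻¹·(x − y − Q·n))^{1/2} equals the infimum over n ∈ ℤ^g of ‖S⁻¹·(x − y) − S·n‖₂. -/
import Mathlib


open Matrix

/-- For a symmetric positive definite `Q` with positive definite square root
`S` (`S·S = Q`): `(v − Q·n)ᵀ·Q⁻¹·(v − Q·n) = ‖S⁻¹·v − S·n‖₂²` (the squared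
Euclidean norm being the dot product of the vector with itself), and hence the
infimum over integer vectors `n` of `((x−y−Qn)ᵀQ⁻¹(x−y−Qn))^{1/2}` equals the
infimum over `n` of `‖S⁻¹·(x−y) − S·n‖₂`. -/
theorem stmt_10 (g : ℕ) (Q S : Matrix (Fin g) (Fin g) ℝ)
    (hQ : Q.PosDef) (hS : S.PosDef) (hSS : S * S = Q) :
    (∀ v n : Fin g → ℝ,
      (v - Q.mulVec n) ⬝ᵥ Q⁻¹.mulVec (v - Q.mulVec n) =
        (S⁻¹.mulVec v - S.mulVec n) ⬝ᵥ (S⁻¹.mulVec v - S.mulVec n)) ∧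
    (∀ x y : Fin g → ℝ,
      (⨅ n : Fin g → ℤ,
        Real.sqrt ((x - y - Q.mulVec (fun i => (n i : ℝ))) ⬝ᵥ
          Q⁻¹.mulVec (x - y - Q.mulVec (fun i => (n i : ℝ))))) =
      ⨅ n : Fin g → ℤ,
        Real.sqrt ((S⁻¹.mulVec (x - y) - S.mulVec (fun i => (n i : ℝ))) ⬝ᵥ
          (S⁻¹.mulVec (x - y) - S.mulVec (fun i => (n i : ℝ))))) := by
  have hSdet : IsUnit S.det := isUnit_iff_ne_zero.mpr (ne_of_gt hS.det_pos)
  have hQinv : Q⁻¹ = S⁻¹ * S⁻¹ := by rw [← hSS, Matrix.mul_inv_rev]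
  have hSinvH : S⁻¹.IsHermitian := hS.1.inv
  have hSinvQ : S⁻¹ * Q = S := by
    rw [← hSS, ← Matrix.mul_assoc, Matrix.nonsing_inv_mul S hSdet, Matrix.one_mul]
  have key : ∀ v n : Fin g → ℝ,
      (v - Q.mulVec n) ⬝ᵥ Q⁻¹.mulVec (v - Q.mulVec n) =
        (S⁻¹.mulVec v - S.mulVec n) ⬝ᵥ (S⁻¹.mulVec v - S.mulVec n) := by
    intro v n
    have hvec : S⁻¹.mulVec (v - Q.mulVec n) = S⁻¹.mulVec v - S.mulVec n := by
      rw [Matrix.mulVec_sub, Matrix.mulVec_mulVec, hSinvQ]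
    rw [hQinv, ← Matrix.mulVec_mulVec, Matrix.dotProduct_mulVec, ← hvec]
    congr 1
    rw [← Matrix.mulVec_transpose, show S⁻¹ᵀ = S⁻¹ from hSinvH]
  refine ⟨key, fun x y => ?_⟩
  congr 1
  funext n
  rw [key (x - y) (fun i => (n i : ℝ))]
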